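/- Let n ≥ 2, d ≥ 2, and let i₁, …, i_d ∈ {1, …, n} with i₁ ≠ i₂. Order the words of length d in X₁, …, X_n lexicographically using X₁ < X₂ < ⋯ < X_n. Then among the length-d words having nonzero coefficient in the basis expansion of the iterated ring commutator [X_{i₁}, X_{i₂}, …, X_{i_d}] ∈ ℤ⟨X₁, …, X_n⟩, the lexicographically smallest one has coefficient equal to 1 or −1. -/

import Mathlib

/-- The ring commutator `[a,b] = a * b - b * a`. -/
def ringComm {R : Type*} [Ring R] (a b : R) : R := a * b - b * a

/-- `iterComm a [b₁, …, bₘ] = [a, b₁, …, bₘ]`, the left-normed iterated ring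
commutator. -/
def iterComm {R : Type*} [Ring R] : R → List R → R
  | a, [] => a
  | a, b :: l => iterComm (ringComm a b) l

/-- The iterated ring commutator `[a₁, …, a_d]` of a nonempty list. -/
def iterCommList {R : Type*} [Ring R] : List R → R
  | [] => 0
  | a :: l => iterComm a l

/-- The coefficient of the word `w` in the basis expansion of an element of the free
associative `ℤ`-algebra (whose words form a `ℤ`-basis). -/
noncomputable def coeffWord {X : Type*} (F : FreeAlgebra ℤ X) (w : List X) : ℤ :=
  (FreeAlgebra.equivMonoidAlgebraFreeMonoid F).coeff (FreeMonoid.ofList w)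

namespace SmallestWordAux

open FreeAlgebra FreeMonoid

variable {X : Type*}

lemma equiv_ι (x : X) :
    equivMonoidAlgebraFreeMonoid (ι ℤ x) =
      MonoidAlgebra.single (FreeMonoid.of x) (1 : ℤ) := by
  simp [equivMonoidAlgebraFreeMonoid, MonoidAlgebra.of_apply]

lemma coeffWord_sub (P Q : FreeAlgebra ℤ X) (v : List X) :
    coeffWord (P - Q) v = coeffWord P v - coeffWord Q v := by
  unfold coeffWord
  rw [map_sub]
  rfl

lemma coeffWord_mul_ι (P : FreeAlgebra ℤ X) (j : X) (u : List X) :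
    coeffWord (P * ι ℤ j) (u ++ [j]) = coeffWord P u := by
  unfold coeffWord
  rw [map_mul, equiv_ι,
    MonoidAlgebra.mul_single_apply_aux (m := FreeMonoid.of j) (m₂ := FreeMonoid.ofList u)
      (m₁ := FreeMonoid.ofList (u ++ [j])) ?_, mul_one]
  intro a _
  constructor
  · intro h
    have h' : FreeMonoid.toList a ++ [j] = u ++ [j] := congrArg FreeMonoid.toList h
    have := List.append_cancel_right h'
    rw [← FreeMonoid.ofList_toList a, this]
  · rintro rfl
    rfl

lemma coeffWord_mul_ι_ne (P : FreeAlgebra ℤ X) (j : X) (v : List X)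
    (h : ∀ u, v ≠ u ++ [j]) : coeffWord (P * ι ℤ j) v = 0 := by
  unfold coeffWord
  rw [map_mul, equiv_ι, MonoidAlgebra.mul_single_apply_of_not_exists_mul]
  rintro ⟨d, hd⟩
  exact h (FreeMonoid.toList d) (congrArg FreeMonoid.toList hd)

lemma coeffWord_ι_mul (P : FreeAlgebra ℤ X) (j : X) (u : List X) :
    coeffWord (ι ℤ j * P) (j :: u) = coeffWord P u := by
  unfold coeffWord
  rw [map_mul, equiv_ι,
    MonoidAlgebra.single_mul_apply_aux (m := FreeMonoid.of j) (m₂ := FreeMonoid.ofList u)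
      (m₁ := FreeMonoid.ofList (j :: u)) ?_, one_mul]
  intro a _
  constructor
  · intro h
    have h' : j :: FreeMonoid.toList a = j :: u := congrArg FreeMonoid.toList h
    have := List.cons_injective h'
    rw [← FreeMonoid.ofList_toList a, this]
  · rintro rfl
    rfl

lemma coeffWord_ι_mul_ne (P : FreeAlgebra ℤ X) (j : X) (v : List X)
    (h : ∀ u, v ≠ j :: u) : coeffWord (ι ℤ j * P) v = 0 := by
  unfold coeffWord
  rw [map_mul, equiv_ι, MonoidAlgebra.single_mul_apply_of_not_exists_mul]
  rintro ⟨d, hd⟩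
  exact h (FreeMonoid.toList d) (congrArg FreeMonoid.toList hd)

lemma coeffWord_ι_self (x : X) : coeffWord (ι ℤ x) [x] = 1 := by
  unfold coeffWord
  rw [equiv_ι]
  exact Finsupp.single_eq_same

lemma coeffWord_ι_eq (x : X) (v : List X) (h : coeffWord (ι ℤ x) v ≠ 0) : v = [x] := by
  unfold coeffWord at h
  rw [equiv_ι] at h
  by_contra hne
  apply h
  apply Finsupp.single_eq_of_ne
  intro he
  apply hne
  have := congrArg FreeMonoid.toList he
  simpa using this

lemma exists_of_mul_ι {P : FreeAlgebra ℤ X} {j : X} {v : List X}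
    (h : coeffWord (P * ι ℤ j) v ≠ 0) : ∃ u, coeffWord P u ≠ 0 ∧ v = u ++ [j] := by
  by_cases hv : ∃ u, v = u ++ [j]
  · obtain ⟨u, rfl⟩ := hv
    exact ⟨u, by rwa [coeffWord_mul_ι] at h, rfl⟩
  · push_neg at hv
    exact absurd (coeffWord_mul_ι_ne P j v hv) h

lemma exists_of_ι_mul {P : FreeAlgebra ℤ X} {j : X} {v : List X}
    (h : coeffWord (ι ℤ j * P) v ≠ 0) : ∃ u, coeffWord P u ≠ 0 ∧ v = j :: u := by
  by_cases hv : ∃ u, v = j :: u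
  · obtain ⟨u, rfl⟩ := hv
    exact ⟨u, by rwa [coeffWord_ι_mul] at h, rfl⟩
  · push_neg at hv
    exact absurd (coeffWord_ι_mul_ne P j v hv) h

section Lex

variable {α : Type*} [LinearOrder α]

lemma lex_irrefl (x : List α) : ¬ List.Lex (· < ·) x x := by
  induction x with
  | nil => intro h; cases h
  | cons a l ih =>
    intro h
    cases h with
    | rel h => exact lt_irrefl _ h
    | cons h => exact ih h

lemma lex_append {w v : List α} (h : List.Lex (· < ·) w v) (hl : w.length = v.length)
    (s t : List α) : List.Lex (· < ·) (w ++ s) (v ++ t) := by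
  induction h with
  | nil => simp at hl
  | @rel a l₁ b l₂ h => exact List.Lex.rel h
  | @cons a l₁ l₂ h ih => exact List.Lex.cons (ih (by simpa using hl))

lemma K1 {m : α} : ∀ w : List α, (∀ x ∈ w, m ≤ x) → (∃ x ∈ w, m < x) →
    List.Lex (· < ·) (m :: w) (w ++ [m])
  | [], _, hb => by simp at hb
  | a :: w', hle, hb => by
    rcases (hle a (by simp)).lt_or_eq with hlt | heq
    · exact List.Lex.rel hlt
    · subst heq
      refine List.Lex.cons ?_
      refine K1 w' (fun x hx => hle x (by simp [hx])) ?_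
      obtain ⟨x, hx, hmx⟩ := hb
      rcases List.mem_cons.1 hx with rfl | hx'
      · exact absurd hmx (lt_irrefl _)
      · exact ⟨x, hx', hmx⟩

lemma K2 {m : α} {w u : List α} (h : List.Lex (· < ·) w u)
    (hw : ∀ x ∈ w, m ≤ x) (hu : ∀ x ∈ u, m ≤ x) :
    List.Lex (· < ·) (m :: w) (u ++ [m]) := by
  induction h with
  | @nil b u' =>
    rcases (hu b (by simp)).lt_or_eq with hlt | heq
    · exact List.Lex.rel hlt
    · subst heq
      refine List.Lex.cons ?_
      cases u' <;> exact List.Lex.nil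
  | @rel x w' y u' hxy =>
    exact List.Lex.rel (lt_of_le_of_lt (hw x (by simp)) hxy)
  | @cons a w' u' h ih =>
    rcases (hw a (by simp)).lt_or_eq with hlt | heq
    · exact List.Lex.rel hlt
    · subst heq
      exact List.Lex.cons (ih (fun x hx => hw x (by simp [hx]))
        (fun x hx => hu x (by simp [hx])))

end Lex

variable {k : ℕ}

/-- The induction invariant: `w` is the lexicographically smallest word with nonzero
coefficient in `P`, its coefficient is `±1`, all nonzero words of `P` have the same
length and letters `≥ m`, `w` starts with `m` and contains a letter `> m`. -/
structure MinWord (P : FreeAlgebra ℤ (Fin k)) (m : Fin k) (w : List (Fin k)) : Prop where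
  coeff : coeffWord P w = 1 ∨ coeffWord P w = -1
  min : ∀ v, coeffWord P v ≠ 0 → w = v ∨ List.Lex (· < ·) w v
  len : ∀ v, coeffWord P v ≠ 0 → v.length = w.length
  ge : ∀ v, coeffWord P v ≠ 0 → ∀ x ∈ v, m ≤ x
  hd : ∃ t, w = m :: t
  big : ∃ x ∈ w, m < x

lemma MinWord.ne_zero {P : FreeAlgebra ℤ (Fin k)} {m : Fin k} {w : List (Fin k)}
    (h : MinWord P m w) : coeffWord P w ≠ 0 := by
  rcases h.coeff with h' | h' <;> rw [h'] <;> decide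

lemma ringComm_eq {R : Type*} [Ring R] (a b : R) : ringComm a b = a * b - b * a := rfl

lemma coeffWord_ringComm (P : FreeAlgebra ℤ (Fin k)) (j : Fin k) (v : List (Fin k)) :
    coeffWord (ringComm P (ι ℤ j)) v =
      coeffWord (P * ι ℤ j) v - coeffWord (ι ℤ j * P) v := by
  rw [ringComm_eq, coeffWord_sub]

lemma part_nonzero {P : FreeAlgebra ℤ (Fin k)} {j : Fin k} {v : List (Fin k)}
    (h : coeffWord (ringComm P (ι ℤ j)) v ≠ 0) :
    coeffWord (P * ι ℤ j) v ≠ 0 ∨ coeffWord (ι ℤ j * P) v ≠ 0 := by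
  by_contra hc
  push_neg at hc
  rw [coeffWord_ringComm, hc.1, hc.2] at h
  simp at h

/-- Step case: multiplying by a generator larger than the current minimum letter. -/
lemma step_gt {P : FreeAlgebra ℤ (Fin k)} {m : Fin k} {w : List (Fin k)} {j : Fin k}
    (h : MinWord P m w) (hj : m < j) : MinWord (ringComm P (ι ℤ j)) m (w ++ [j]) := by
  obtain ⟨t, rfl⟩ := h.hd
  have hB0 : coeffWord (ι ℤ j * P) ((m :: t) ++ [j]) = 0 := by
    apply coeffWord_ι_mul_ne
    intro u hu
    rw [List.cons_append] at hu
    exact hj.ne' (List.head_eq_of_cons_eq hu).symm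
  have hcoeff : coeffWord (ringComm P (ι ℤ j)) ((m :: t) ++ [j]) = coeffWord P (m :: t) := by
    rw [coeffWord_ringComm, hB0, sub_zero, coeffWord_mul_ι]
  refine ⟨by rw [hcoeff]; exact h.coeff, ?_, ?_, ?_, ⟨t ++ [j], by simp⟩,
    ⟨j, by simp, hj⟩⟩
  · intro v hv
    rcases part_nonzero hv with hA | hB
    · obtain ⟨u, hu, rfl⟩ := exists_of_mul_ι hA
      rcases h.min u hu with rfl | hlt
      · exact Or.inl rfl
      · exact Or.inr (lex_append hlt (h.len u hu).symm _ _)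
    · obtain ⟨u, hu, rfl⟩ := exists_of_ι_mul hB
      exact Or.inr (by rw [List.cons_append]; exact List.Lex.rel hj)
  · intro v hv
    rcases part_nonzero hv with hA | hB
    · obtain ⟨u, hu, rfl⟩ := exists_of_mul_ι hA
      simp [h.len u hu]
    · obtain ⟨u, hu, rfl⟩ := exists_of_ι_mul hB
      simp [h.len u hu]
  · intro v hv x hx
    rcases part_nonzero hv with hA | hB
    · obtain ⟨u, hu, rfl⟩ := exists_of_mul_ι hA
      rcases List.mem_append.1 hx with hx' | hx'
      · exact h.ge u hu x hx'
      · simp only [List.mem_singleton] at hx'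
        subst hx'
        exact hj.le
    · obtain ⟨u, hu, rfl⟩ := exists_of_ι_mul hB
      rcases List.mem_cons.1 hx with rfl | hx'
      · exact hj.le
      · exact h.ge u hu x hx'

/-- Step case: multiplying by a generator `≤` the current minimum letter. -/
lemma step_le {P : FreeAlgebra ℤ (Fin k)} {m : Fin k} {w : List (Fin k)} {j : Fin k}
    (h : MinWord P m w) (hj : j ≤ m) : MinWord (ringComm P (ι ℤ j)) j (j :: w) := by
  have hwletters : ∀ x ∈ w, m ≤ x := h.ge w h.ne_zero
  obtain ⟨t, hw⟩ := h.hd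
  have hwne : w ≠ [] := by rw [hw]; simp
  -- the `P * x_j` part vanishes on `j :: w`
  have hA0 : coeffWord (P * ι ℤ j) (j :: w) = 0 := by
    by_contra hA
    obtain ⟨u, hu, he⟩ := exists_of_mul_ι hA
    rcases lt_or_eq_of_le hj with hlt | heq
    · -- j < m : the first letter of u is ≥ m > j, but it must equal j
      have hune : u ≠ [] := by
        rintro rfl
        simp only [List.nil_append] at he
        have := List.tail_eq_of_cons_eq he
        exact hwne this
      obtain ⟨a, u', rfl⟩ := List.exists_cons_of_ne_nil hune
      rw [List.cons_append] at he
      have ha : a = j := (List.head_eq_of_cons_eq he).symm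
      have : m ≤ a := h.ge (a :: u') hu a (by simp)
      rw [ha] at this
      exact absurd hlt (not_lt.2 this)
    · -- j = m : `j :: w = u ++ [j]` contradicts strict lexicographic comparison
      have hlex : List.Lex (· < ·) (m :: w) (u ++ [m]) := by
        rcases h.min u hu with rfl | hlt
        · exact K1 w hwletters h.big
        · exact K2 hlt hwletters (h.ge u hu)
      rw [← heq, ← he] at hlex
      exact lex_irrefl _ hlex
  have hcoeff : coeffWord (ringComm P (ι ℤ j)) (j :: w) = -coeffWord P w := by
    rw [coeffWord_ringComm, hA0, coeffWord_ι_mul, zero_sub]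
  refine ⟨?_, ?_, ?_, ?_, ⟨w, rfl⟩, ?_⟩
  · rw [hcoeff]
    rcases h.coeff with h' | h' <;> rw [h'] <;> simp
  · intro v hv
    rcases part_nonzero hv with hA | hB
    · obtain ⟨u, hu, rfl⟩ := exists_of_mul_ι hA
      refine Or.inr ?_
      rcases lt_or_eq_of_le hj with hlt | heq
      · have hune : u ≠ [] := by
          rintro rfl
          have := h.len [] hu
          rw [hw] at this
          simp at this
        obtain ⟨a, u', rfl⟩ := List.exists_cons_of_ne_nil hune
        have ha : m ≤ a := h.ge (a :: u') hu a (by simp)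
        rw [List.cons_append]
        exact List.Lex.rel (lt_of_lt_of_le hlt ha)
      · rw [heq]
        rcases h.min u hu with rfl | hlt
        · exact K1 w hwletters h.big
        · exact K2 hlt hwletters (h.ge u hu)
    · obtain ⟨u, hu, rfl⟩ := exists_of_ι_mul hB
      rcases h.min u hu with rfl | hlt
      · exact Or.inl rfl
      · exact Or.inr (List.Lex.cons hlt)
  · intro v hv
    rcases part_nonzero hv with hA | hB
    · obtain ⟨u, hu, rfl⟩ := exists_of_mul_ι hA
      simp [h.len u hu]
    · obtain ⟨u, hu, rfl⟩ := exists_of_ι_mul hB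
      simp [h.len u hu]
  · intro v hv x hx
    rcases part_nonzero hv with hA | hB
    · obtain ⟨u, hu, rfl⟩ := exists_of_mul_ι hA
      rcases List.mem_append.1 hx with hx' | hx'
      · exact hj.trans (h.ge u hu x hx')
      · simp only [List.mem_singleton] at hx'
        subst hx'
        exact le_refl _
    · obtain ⟨u, hu, rfl⟩ := exists_of_ι_mul hB
      rcases List.mem_cons.1 hx with rfl | hx'
      · exact le_refl x
      · exact hj.trans (h.ge u hu x hx')
  · obtain ⟨x, hx, hmx⟩ := h.big
    exact ⟨x, by simp [hx], lt_of_le_of_lt hj hmx⟩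

/-- Iterating the step over a list of generators. -/
lemma iter (l : List (Fin k)) : ∀ (P : FreeAlgebra ℤ (Fin k)) (m : Fin k) (w : List (Fin k)),
    MinWord P m w → ∃ m' w', MinWord (iterComm P (l.map (ι ℤ))) m' w' ∧
      w'.length = w.length + l.length := by
  induction l with
  | nil => exact fun P m w h => ⟨m, w, h, by simp⟩
  | cons j l ih =>
    intro P m w h
    have hstep : ∃ m₁ w₁, MinWord (ringComm P (ι ℤ j)) m₁ w₁ ∧ w₁.length = w.length + 1 := by
      by_cases hj : j ≤ m
      · exact ⟨j, j :: w, step_le h hj, by simp⟩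
      · exact ⟨m, w ++ [j], step_gt h (not_le.1 hj), by simp⟩
    obtain ⟨m₁, w₁, h₁, hl₁⟩ := hstep
    obtain ⟨m', w', h', hl'⟩ := ih (ringComm P (ι ℤ j)) m₁ w₁ h₁
    refine ⟨m', w', ?_, by simp [hl', hl₁]; omega⟩
    simpa [iterComm] using h'

/-- Base case: the commutator of two distinct generators. -/
lemma base (a b : Fin k) (hab : a ≠ b) :
    ∃ m w, MinWord (ringComm (ι ℤ a) (ι ℤ b)) m w ∧ w.length = 2 := by
  have hcoeff1 : coeffWord (ringComm (ι ℤ a) (ι ℤ b)) [a, b] = 1 := by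
    rw [coeffWord_ringComm]
    have h1 : coeffWord (ι ℤ a * ι ℤ b) [a, b] = 1 := by
      have he : ([a, b] : List (Fin k)) = [a] ++ [b] := rfl
      rw [he, coeffWord_mul_ι, coeffWord_ι_self]
    have h2 : coeffWord (ι ℤ b * ι ℤ a) [a, b] = 0 := by
      apply coeffWord_ι_mul_ne
      intro u hu
      exact hab (List.head_eq_of_cons_eq hu)
    rw [h1, h2]; ring
  have hcoeff2 : coeffWord (ringComm (ι ℤ a) (ι ℤ b)) [b, a] = -1 := by
    rw [coeffWord_ringComm]
    have h1 : coeffWord (ι ℤ a * ι ℤ b) [b, a] = 0 := by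
      apply coeffWord_mul_ι_ne
      intro u hu
      have h2 : u.length = 1 := by
        have := congrArg List.length hu
        simp at this
        omega
      obtain ⟨x, rfl⟩ := List.length_eq_one_iff.1 h2
      simp only [List.singleton_append, List.cons.injEq] at hu
      exact hab hu.2.1
    have h2 : coeffWord (ι ℤ b * ι ℤ a) [b, a] = 1 := by
      rw [coeffWord_ι_mul, coeffWord_ι_self]
    rw [h1, h2]; ring
  have hclass : ∀ v, coeffWord (ringComm (ι ℤ a) (ι ℤ b)) v ≠ 0 → v = [a, b] ∨ v = [b, a] := by
    intro v hv
    rcases part_nonzero hv with hA | hB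
    · obtain ⟨u, hu, rfl⟩ := exists_of_mul_ι hA
      rw [coeffWord_ι_eq a u hu]
      exact Or.inl rfl
    · obtain ⟨u, hu, rfl⟩ := exists_of_ι_mul hB
      rw [coeffWord_ι_eq a u hu]
      exact Or.inr rfl
  rcases lt_or_gt_of_ne hab with hlt | hlt
  · refine ⟨a, [a, b], ⟨Or.inl hcoeff1, ?_, ?_, ?_, ⟨[b], rfl⟩, ⟨b, by simp, hlt⟩⟩, rfl⟩
    · intro v hv
      rcases hclass v hv with rfl | rfl
      · exact Or.inl rfl
      · exact Or.inr (List.Lex.rel hlt)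
    · intro v hv; rcases hclass v hv with rfl | rfl <;> rfl
    · intro v hv x hx
      have hx' : x = a ∨ x = b := by
        rcases hclass v hv with rfl | rfl <;> simp at hx <;> tauto
      rcases hx' with rfl | rfl
      · exact le_refl x
      · exact hlt.le
  · refine ⟨b, [b, a], ⟨Or.inr hcoeff2, ?_, ?_, ?_, ⟨[a], rfl⟩, ⟨a, by simp, hlt⟩⟩, rfl⟩
    · intro v hv
      rcases hclass v hv with rfl | rfl
      · exact Or.inr (List.Lex.rel hlt)
      · exact Or.inl rfl
    · intro v hv; rcases hclass v hv with rfl | rfl <;> rfl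
    · intro v hv x hx
      have hx' : x = a ∨ x = b := by
        rcases hclass v hv with rfl | rfl <;> simp at hx <;> tauto
      rcases hx' with rfl | rfl
      · exact hlt.le
      · exact le_refl x

end SmallestWordAux

open SmallestWordAux

/-- For `n ≥ 2`, `d ≥ 2` and indices `i₁, …, i_d` with `i₁ ≠ i₂`, among the length-`d`
words with nonzero coefficient in `[X_{i₁}, …, X_{i_d}]`, the lexicographically smallest
one has coefficient `1` or `-1`. -/
theorem smallest_word_of_iterCommList_has_unit_coeff (n d : ℕ) (hn : 2 ≤ n) (hd : 2 ≤ d)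
    (idx : Fin d → Fin n)
    (h12 : idx ⟨0, by omega⟩ ≠ idx ⟨1, by omega⟩) :
    ∃ w : List (Fin n), w.length = d ∧
      coeffWord (iterCommList (List.ofFn fun t => FreeAlgebra.ι ℤ (idx t))) w ≠ 0 ∧
      (∀ w' : List (Fin n), w'.length = d →
        coeffWord (iterCommList (List.ofFn fun t => FreeAlgebra.ι ℤ (idx t))) w' ≠ 0 →
        w = w' ∨ List.Lex (· < ·) w w') ∧
      (coeffWord (iterCommList (List.ofFn fun t => FreeAlgebra.ι ℤ (idx t))) w = 1 ∨
        coeffWord (iterCommList (List.ofFn fun t => FreeAlgebra.ι ℤ (idx t))) w = -1) := by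
  obtain ⟨e, rfl⟩ : ∃ e, d = e + 2 := ⟨d - 2, by omega⟩
  set f : Fin (e + 2) → FreeAlgebra ℤ (Fin n) := fun t => FreeAlgebra.ι ℤ (idx t) with hf
  have hofn : List.ofFn f =
      FreeAlgebra.ι ℤ (idx ⟨0, by omega⟩) :: FreeAlgebra.ι ℤ (idx ⟨1, by omega⟩) ::
        (List.ofFn fun i : Fin e => idx i.succ.succ).map (FreeAlgebra.ι ℤ) := by
    rw [List.ofFn_succ, List.ofFn_succ, List.map_ofFn]
    congr 2
  have hiter : iterCommList (List.ofFn f) =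
      iterComm (ringComm (FreeAlgebra.ι ℤ (idx ⟨0, by omega⟩))
        (FreeAlgebra.ι ℤ (idx ⟨1, by omega⟩)))
        ((List.ofFn fun i : Fin e => idx i.succ.succ).map (FreeAlgebra.ι ℤ)) := by
    rw [hofn]; rfl
  obtain ⟨m, w, hbase, hlen⟩ := base (idx ⟨0, by omega⟩) (idx ⟨1, by omega⟩) h12
  obtain ⟨m', w', hmin, hlen'⟩ := iter _ _ _ _ hbase
  rw [← hiter] at hmin
  refine ⟨w', by rw [hlen', hlen, List.length_ofFn]; omega, hmin.ne_zero, fun v _ hv => hmin.min v hv, hmin.coeff⟩
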